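/- Let k be a finite field with q elements, r ∈ k, and l ≥ 0 an integer. Then |A_r^l| = (q^l − (−1)^l)/(q+1) and |C_r^l| = (q^{l+1} + (−1)^l)/(q+1). -/

import Mathlib

/-- The monoid homomorphism π sending a word α₁…α_l over k to the matrix product
[[0,1],[−1,α₁]] ⋯ [[0,1],[−1,α_l]]. -/
def piWord {k : Type*} [Field k] (w : List k) : Matrix (Fin 2) (Fin 2) k :=
  (w.map fun α => !![0, 1; -1, α]).prod

/-- A_r : words w with π(w) = [[a,b],[c,d]] satisfying d = b·r and b ≠ 0. -/
def Ar {k : Type*} [Field k] (r : k) : Set (List k) :=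
  {w | piWord w 1 1 = piWord w 0 1 * r ∧ piWord w 0 1 ≠ 0}

/-- Number of words of length l lying in A_r. -/
noncomputable def cardArl {k : Type*} [Field k] (r : k) (l : ℕ) : ℕ :=
  Nat.card {w : List k // w.length = l ∧ w ∈ Ar r}

/-- Number of words of length l lying in C_r = F_k ∖ A_r. -/
noncomputable def cardCrl {k : Type*} [Field k] (r : k) (l : ℕ) : ℕ :=
  Nat.card {w : List k // w.length = l ∧ w ∉ Ar r}

/-!
Write `π(v) = [[a, b], [c, d]]`. Prepending a letter gives `π(α :: v) = [[b, d], [c', α d - b]]`,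
so `α :: v ∈ A_r` iff `d ≠ 0` and `α = (d r + b) / d`. Hence `|A_r^{l+1}|` is the number of words
of length `l` with `d ≠ 0`, which is `q^l - |A_0^l|` because `det π(v) = 1` forces `b ≠ 0` when
`d = 0`. Together with `|A_r^0| = 0`, the recursion `a_{l+1} + a_l = q^l` gives
`(q + 1) a_l = q^l - (-1)^l` for every `r`, and `C_r^l` is the complement of `A_r^l`.
-/

theorem card_length_eq_and_add_card_length_eq_and_not {α : Type*} [Fintype α]
    (P : List α → Prop) (l : ℕ) :
    Nat.card {w : List α // w.length = l ∧ P w} + Nat.card {w : List α // w.length = l ∧ ¬P w} =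
      Fintype.card α ^ l := by
  have hl : Nat.card {w : List α | w.length = l} = Fintype.card α ^ l := by
    rw [← card_vector]
    exact Nat.card_eq_fintype_card (α := List.Vector α l)
  have h := Set.ncard_inter_add_ncard_sdiff_eq_ncard {w : List α | w.length = l} {w | P w}
    (List.finite_length_eq α l)
  rwa [← Nat.card_coe_set_eq, ← Nat.card_coe_set_eq, ← Nat.card_coe_set_eq, hl] at h

section Field

variable {k : Type*} [Field k]

theorem piWord_cons (α : k) (w : List k) : piWord (α :: w) = !![0, 1; -1, α] * piWord w := by
  simp [piWord]

theorem piWord_cons_zero_one (α : k) (w : List k) : piWord (α :: w) 0 1 = piWord w 1 1 := by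
  simp [piWord_cons, Matrix.mul_apply]

theorem piWord_cons_one_one (α : k) (w : List k) :
    piWord (α :: w) 1 1 = α * piWord w 1 1 - piWord w 0 1 := by
  simp [piWord_cons, Matrix.mul_apply]
  ring

theorem det_piWord (w : List k) : (piWord w).det = 1 := by
  induction w with
  | nil => simp [piWord]
  | cons α w ih =>
    rw [piWord_cons, Matrix.det_mul, ih, Matrix.det_fin_two_of]
    ring

theorem piWord_zero_one_ne_zero_of_one_one_eq_zero {w : List k} (h : piWord w 1 1 = 0) :
    piWord w 0 1 ≠ 0 := by
  intro h'
  simpa [Matrix.det_fin_two, h, h'] using det_piWord w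

theorem nil_notMem_Ar (r : k) : [] ∉ Ar r := by
  simp [Ar, piWord]

theorem mem_Ar_zero_iff {w : List k} : w ∈ Ar 0 ↔ piWord w 1 1 = 0 := by
  simpa [Ar] using piWord_zero_one_ne_zero_of_one_one_eq_zero

theorem cons_mem_Ar_iff {r α : k} {w : List k} :
    α :: w ∈ Ar r ↔
      piWord w 1 1 ≠ 0 ∧ α = (piWord w 1 1 * r + piWord w 0 1) / piWord w 1 1 := by
  rw [Ar, Set.mem_ofPred_eq, piWord_cons_zero_one, piWord_cons_one_one]
  by_cases hd : piWord w 1 1 = 0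
  · simp [hd]
  · rw [eq_div_iff hd]
    constructor
    · rintro ⟨h, -⟩
      exact ⟨hd, by linear_combination h⟩
    · rintro ⟨-, h⟩
      exact ⟨by linear_combination h, hd⟩

def tailArEquiv (r : k) (l : ℕ) :
    {w : List k // w.length = l + 1 ∧ w ∈ Ar r} ≃
      {w : List k // w.length = l ∧ piWord w 1 1 ≠ 0} where
  toFun
    | ⟨_ :: w, hl, hw⟩ => ⟨w, by simpa using hl, (cons_mem_Ar_iff.1 hw).1⟩
  invFun w := ⟨(piWord w.1 1 1 * r + piWord w.1 0 1) / piWord w.1 1 1 :: w.1,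
    by simp [w.2.1], cons_mem_Ar_iff.2 ⟨w.2.2, rfl⟩⟩
  left_inv
    | ⟨_ :: w, _, hw⟩ => by simp [(cons_mem_Ar_iff.1 hw).2]
  right_inv _ := rfl

theorem cardArl_zero (r : k) : cardArl r 0 = 0 := by
  rw [cardArl, Nat.card_eq_zero]
  exact .inl ⟨fun ⟨w, hl, hw⟩ => nil_notMem_Ar r (List.eq_nil_of_length_eq_zero hl ▸ hw)⟩

variable [Fintype k]

theorem cardArl_succ_add_cardArl_zero (r : k) (l : ℕ) :
    cardArl r (l + 1) + cardArl (0 : k) l = Fintype.card k ^ l := by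
  rw [cardArl, cardArl, Nat.card_congr (tailArEquiv r l)]
  simpa only [not_not, ← mem_Ar_zero_iff] using
    card_length_eq_and_add_card_length_eq_and_not (fun w : List k => piWord w 1 1 ≠ 0) l

theorem cardArl_mul_card_add_one (r : k) (l : ℕ) :
    (cardArl r l : ℤ) * (Fintype.card k + 1) = Fintype.card k ^ l - (-1) ^ l := by
  induction l generalizing r with
  | zero => simp [cardArl_zero]
  | succ l ih =>
    have h : (cardArl r (l + 1) : ℤ) + cardArl (0 : k) l = Fintype.card k ^ l := mod_cast
      cardArl_succ_add_cardArl_zero r l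
    linear_combination (Fintype.card k + 1 : ℤ) * h - ih 0

theorem cardArl_add_cardCrl (r : k) (l : ℕ) : cardArl r l + cardCrl r l = Fintype.card k ^ l :=
  card_length_eq_and_add_card_length_eq_and_not (· ∈ Ar r) l

end Field

theorem stmt5 {k : Type*} [Field k] [Fintype k] (r : k) (l : ℕ) :
    (cardArl r l : ℤ) = ((Fintype.card k : ℤ) ^ l - (-1) ^ l) / (Fintype.card k + 1) ∧
    (cardCrl r l : ℤ) = ((Fintype.card k : ℤ) ^ (l + 1) + (-1) ^ l) / (Fintype.card k + 1) := by
  have hq : (Fintype.card k : ℤ) + 1 ≠ 0 := by positivity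
  have hA := cardArl_mul_card_add_one r l
  have hAC : (cardArl r l : ℤ) + cardCrl r l = Fintype.card k ^ l := mod_cast
    cardArl_add_cardCrl r l
  exact ⟨Int.eq_ediv_of_mul_eq_right hq (by linear_combination hA),
    Int.eq_ediv_of_mul_eq_right hq (by linear_combination (Fintype.card k + 1 : ℤ) * hAC - hA)⟩
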